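/- There exist absolute constants c, C > 0 such that for all functions b, β that are finite linear combinations of Haar functions and every fixed choice of signs σ ∈ {−1,+1}^𝒟, the operator norm of P^{0,0}_{b,1} T_σ P^{0,1}_{β,0} on L²(ℝ) is independent of σ and satisfies c · ‖{⟨b,h¹_I⟩⟨β,h_I⟩/|I|}‖_Carl ≤ ‖P^{0,0}_{b,1} T_σ P^{0,1}_{β,0}‖_{2→2} ≤ C · ‖{⟨b,h¹_I⟩⟨β,h_I⟩/|I|}‖_Carl. -/

import Mathlib

open MeasureTheory ProbabilityTheory Real Filter
open scoped ENNReal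

attribute [local instance] Classical.propDecidable

noncomputable section

namespace RandomParaproducts

/-- Dyadic intervals: `(n, k)` represents `[k·2ⁿ, (k+1)·2ⁿ)`. -/
abbrev D : Type := ℤ × ℤ

/-- The length `2ⁿ` of the dyadic interval `(n, k)`. -/
def len (I : D) : ℝ := (2 : ℝ) ^ I.1

/-- The dyadic interval `[k·2ⁿ, (k+1)·2ⁿ)` as a subset of `ℝ`. -/
def ival (I : D) : Set ℝ := Set.Ico ((I.2 : ℝ) * (2 : ℝ) ^ I.1) (((I.2 : ℝ) + 1) * (2 : ℝ) ^ I.1)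

/-- The left half of a dyadic interval. -/
def lc (I : D) : D := (I.1 - 1, 2 * I.2)

/-- The right half of a dyadic interval. -/
def rc (I : D) : D := (I.1 - 1, 2 * I.2 + 1)

/-- The `L²`-normalized Haar function `h_I = h⁰_I`. -/
def haar (I : D) : ℝ → ℝ := fun x =>
  (Real.sqrt (len I))⁻¹ *
    ((ival (rc I)).indicator (fun _ => (1 : ℝ)) x - (ival (lc I)).indicator (fun _ => (1 : ℝ)) x)

/-- The function `h¹_I = |h_I| = |I|^{-1/2} 1_I`. -/
def haar1 (I : D) : ℝ → ℝ := fun x =>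
  (Real.sqrt (len I))⁻¹ * (ival I).indicator (fun _ => (1 : ℝ)) x

/-- `h^ε_I`, where `false` codes the exponent `0` and `true` codes the exponent `1`. -/
def hfun : Bool → D → ℝ → ℝ
  | false => haar
  | true => haar1

/-- The inner product `⟨f, g⟩ = ∫ f g` on `L²(ℝ)`. -/
def ip (f g : ℝ → ℝ) : ℝ := ∫ x, f x * g x

/-- The paraproduct `P^{ε,δ}_b f = ∑_I b_I ⟨f, h^δ_I⟩ h^ε_I` with finitely supported
numerical symbol `b`. -/
def P (e d : Bool) (b : D →₀ ℝ) (f : ℝ → ℝ) : ℝ → ℝ := fun x =>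
  ∑ I ∈ b.support, b I * ip f (hfun d I) * hfun e I x

/-- The signed paraproduct `P^{σ,ε,δ}_b f = ∑_I σ_I b_I ⟨f, h^δ_I⟩ h^ε_I`. -/
def Psig (σ : D → ℝ) (e d : Bool) (b : D →₀ ℝ) (f : ℝ → ℝ) : ℝ → ℝ := fun x =>
  ∑ I ∈ b.support, σ I * (b I * ip f (hfun d I) * hfun e I x)

/-- The square of the `L²(ℝ)` norm, `‖g‖₂² = ∫ g²`. -/
def l2normSq (g : ℝ → ℝ) : ℝ := ∫ x, (g x) ^ 2

/-- The Carleson norm of a sequence `a` whose nonzero entries lie in the finite set `s`: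
`sup_J (|J|⁻¹ ∑_{I ⊆ J} a_I² |I|)^{1/2}`. -/
def carlOn (s : Finset D) (a : D → ℝ) : ℝ :=
  ⨆ J : D, Real.sqrt ((len J)⁻¹ *
    ∑ I ∈ s.filter (fun I => ival I ⊆ ival J), (a I) ^ 2 * len I)

/-- `μ` is the law of independent uniformly distributed random signs `{σ_I : I ∈ 𝒟}`. -/
def IsSignMeasure (μ : Measure (D → ℝ)) : Prop :=
  IsProbabilityMeasure μ ∧
    iIndepFun (fun I σ => σ I) μ ∧
    ∀ I : D, μ.map (fun σ => σ I) =
      (2⁻¹ : ℝ≥0∞) • (Measure.dirac (1 : ℝ) + Measure.dirac (-1 : ℝ))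

/-- `f` is a unit vector of `L²(ℝ)`. -/
def UnitL2 (f : ℝ → ℝ) : Prop := MemLp f 2 volume ∧ eLpNorm f 2 volume = 1

/-- The operator norm on `L²(ℝ)` of a map defined on functions. -/
def opNorm (T : (ℝ → ℝ) → ℝ → ℝ) : ℝ :=
  ⨆ f : {f : ℝ → ℝ // UnitL2 f}, Real.sqrt (l2normSq (T f.1))

/-- The averaged operator norm `sup_{‖f‖₂ = 1} (𝔼 ‖T_σ f‖₂²)^{1/2}`. -/
def avgOpNorm (μ : Measure (D → ℝ)) (T : (D → ℝ) → (ℝ → ℝ) → ℝ → ℝ) : ℝ :=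
  ⨆ f : {f : ℝ → ℝ // UnitL2 f}, Real.sqrt (∫ σ, l2normSq (T σ f.1) ∂μ)

/-- `b` is the finite linear combination of Haar functions with coefficients `c`. -/
def FinHaar (b : ℝ → ℝ) (c : D →₀ ℝ) : Prop :=
  b = fun x => ∑ I ∈ c.support, c I * haar I x

/-- The paraproduct `P^{ε,γ}_{b,α} f = ∑_{I} (⟨b, h^α_I⟩/|I|^{1/2}) ⟨f, h^γ_I⟩ h^ε_I` with
function symbol `b`, the sum extended over a finite set `s` containing all the
nonvanishing terms. -/
def Pb (s : Finset D) (e g a : Bool) (b : ℝ → ℝ) (f : ℝ → ℝ) : ℝ → ℝ := fun x =>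
  ∑ I ∈ s, (ip b (hfun a I) / Real.sqrt (len I)) * ip f (hfun g I) * hfun e I x

lemma measurableSet_ival (I : D) : MeasurableSet (ival I) := measurableSet_Ico

lemma volume_ival_ne_top (I : D) : volume (ival I) ≠ ⊤ := by
  simp only [ival, Real.volume_Ico]; exact ENNReal.ofReal_ne_top

lemma memℒp_haar (I : D) : MemLp (haar I) 2 volume := by
  have h1 : MemLp ((ival (rc I)).indicator (fun _ => (1 : ℝ))) 2 volume :=
    memLp_indicator_const 2 (measurableSet_ival _) 1 (Or.inr (volume_ival_ne_top _))
  have h2 : MemLp ((ival (lc I)).indicator (fun _ => (1 : ℝ))) 2 volume :=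
    memLp_indicator_const 2 (measurableSet_ival _) 1 (Or.inr (volume_ival_ne_top _))
  exact ((h1.sub h2).const_mul ((Real.sqrt (len I))⁻¹))

/-- The Haar function `h_I` as an element of `L²(ℝ)`. -/
def haarLp (I : D) : Lp ℝ 2 (volume : Measure ℝ) := (memℒp_haar I).toLp (haar I)

/-- The random Haar multiplier `T_σ f = ∑_{I ∈ 𝒟} σ_I ⟨f, h_I⟩ h_I`, as an element of
`L²(ℝ)`; the (infinite) sum converges unconditionally in `L²`. -/
def Tfull (σ : D → ℝ) (g : ℝ → ℝ) : Lp ℝ 2 (volume : Measure ℝ) :=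
  ∑' I : D, (σ I * ip g (haar I)) • haarLp I

/-- The composition `M_b T_σ M_β` applied to `f`, as a function. -/
def MbTM (σ : D → ℝ) (b β f : ℝ → ℝ) : ℝ → ℝ := fun x =>
  b x * (Tfull σ fun y => β y * f y) x

/-!
By orthonormality of the Haar system, `‖P^{0,0}_{b,1} T_σ P^{0,1}_{β,0} f‖₂²` equals
`∑_I (σ_I a_I ⟨f, h¹_I⟩)²` with `a_I = ⟨b, h¹_I⟩⟨β, h_I⟩/|I|`. As `σ_I² = 1`, the operator norm is
that of the Carleson embedding `f ↦ (a_I ⟨f, h¹_I⟩)_I`, whatever the signs. Testing it on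
`f = h¹_J` bounds it below by the Carleson norm of `a`. The bound `2 ‖a‖_Carl` from above is the
dyadic Carleson embedding theorem, proved by induction on the scale of `J` with the Bellman
function `4 ∫_J f² - 4 (∫_J f)² / (|J| + A_J)`, `A_J` being the Carleson mass inside `J`.
-/

/-! ### Dyadic intervals -/

lemma len_pos (I : D) : 0 < len I := zpow_pos two_pos _

lemma mem_ival_iff {I : D} {x : ℝ} : x ∈ ival I ↔ ⌊x / len I⌋ = I.2 := by
  rw [Int.floor_eq_iff, le_div_iff₀ (len_pos I), div_lt_iff₀ (len_pos I)]
  rfl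

lemma floor_div_two_zpow_add (x : ℝ) (n : ℤ) (p : ℕ) :
    ⌊x / 2 ^ (n + p)⌋ = ⌊x / 2 ^ n⌋ / 2 ^ p := by
  have h := Int.floor_div_natCast (x / 2 ^ n) (2 ^ p)
  push_cast at h
  rw [zpow_add₀ two_ne_zero, ← div_div, zpow_natCast, h]

/-- The dyadic interval of scale `m` containing `I`, when `I.1 ≤ m`. -/
def ancestor (m : ℤ) (I : D) : D := (m, I.2 / 2 ^ (m - I.1).toNat)

lemma ival_subset_ival_ancestor {I : D} {m : ℤ} (h : I.1 ≤ m) :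
    ival I ⊆ ival (ancestor m I) := by
  obtain ⟨p, rfl⟩ : ∃ p : ℕ, m = I.1 + p := ⟨(m - I.1).toNat, by omega⟩
  intro x hx
  rw [mem_ival_iff] at hx ⊢
  simp only [len, ancestor, add_sub_cancel_left, Int.toNat_natCast] at hx ⊢
  rw [floor_div_two_zpow_add, hx]

lemma ival_eq_union (I : D) : ival I = ival (lc I) ∪ ival (rc I) := by
  ext x
  have h := floor_div_two_zpow_add x (I.1 - 1) 1
  simp only [Set.mem_union, mem_ival_iff, len, lc, rc, Nat.cast_one, sub_add_cancel,
    pow_one] at h ⊢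
  omega

lemma disjoint_ival_of_fst_eq {I J : D} (h : I.1 = J.1) (hne : I ≠ J) :
    Disjoint (ival I) (ival J) := by
  refine Set.disjoint_left.2 fun x hI hJ => hne (Prod.ext h ?_)
  rw [mem_ival_iff, len, h] at hI
  rw [← hI, ← mem_ival_iff.1 hJ, len]

lemma disjoint_ival_lc_rc (I : D) : Disjoint (ival (lc I)) (ival (rc I)) :=
  disjoint_ival_of_fst_eq rfl fun h => by simp only [lc, rc, Prod.mk.injEq] at h; omega

lemma ival_nonempty (I : D) : (ival I).Nonempty :=
  Set.nonempty_Ico.2 (mul_lt_mul_of_pos_right (lt_add_one _) (len_pos I))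

lemma ival_subset_or_disjoint {I J : D} (h : I.1 ≤ J.1) :
    ival I ⊆ ival J ∨ Disjoint (ival I) (ival J) := by
  by_cases hJ : ancestor J.1 I = J
  · exact .inl (hJ ▸ ival_subset_ival_ancestor h)
  · exact .inr ((disjoint_ival_of_fst_eq (I := ancestor J.1 I) (J := J) rfl hJ).mono_left
      (ival_subset_ival_ancestor h))

lemma volume_ival (I : D) : volume (ival I) = ENNReal.ofReal (len I) := by
  rw [ival, Real.volume_Ico, len]
  ring_nf

lemma measureReal_ival (I : D) : volume.real (ival I) = len I := by
  rw [measureReal_def, volume_ival, ENNReal.toReal_ofReal (len_pos I).le]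

lemma len_le_of_subset {I J : D} (h : ival I ⊆ ival J) : len I ≤ len J := by
  simpa only [measureReal_ival] using measureReal_mono h (volume_ival_ne_top J)

lemma fst_le_of_subset {I J : D} (h : ival I ⊆ ival J) : I.1 ≤ J.1 :=
  (zpow_le_zpow_iff_right₀ one_lt_two).1 (len_le_of_subset h)

lemma eq_of_subset_of_fst_eq {I J : D} (h : ival I ⊆ ival J) (hs : I.1 = J.1) : I = J := by
  by_contra hne
  obtain ⟨x, hx⟩ := ival_nonempty I
  exact Set.disjoint_left.1 (disjoint_ival_of_fst_eq hs hne) hx (h hx)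

lemma len_lc (I : D) : len (lc I) = len I / 2 := by
  rw [len, len, lc, zpow_sub₀ two_ne_zero, zpow_one]

lemma len_rc (I : D) : len (rc I) = len I / 2 := len_lc I

lemma subset_lc_or_subset_rc_or_eq {I J : D} (h : ival I ⊆ ival J) :
    ival I ⊆ ival (lc J) ∨ ival I ⊆ ival (rc J) ∨ I = J := by
  rcases eq_or_ne I.1 J.1 with hs | hs
  · exact .inr (.inr (eq_of_subset_of_fst_eq h hs))
  have hle : I.1 ≤ J.1 - 1 := by have := fst_le_of_subset h; omega
  obtain ⟨x, hx⟩ := ival_nonempty I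
  rcases (ival_eq_union J ▸ h hx : x ∈ ival (lc J) ∪ ival (rc J)) with hl | hr
  · exact .inl ((ival_subset_or_disjoint hle).resolve_right
      fun hd => Set.disjoint_left.1 hd hx hl)
  · exact .inr (.inl ((ival_subset_or_disjoint hle).resolve_right
      fun hd => Set.disjoint_left.1 hd hx hr))

lemma ival_lc_subset (J : D) : ival (lc J) ⊆ ival J :=
  ival_eq_union J ▸ Set.subset_union_left

lemma ival_rc_subset (J : D) : ival (rc J) ⊆ ival J :=
  ival_eq_union J ▸ Set.subset_union_right

/-! ### The Haar system -/

lemma sqrt_len_pos (I : D) : 0 < √(len I) := Real.sqrt_pos.2 (len_pos I)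

lemma integrable_indicator_ival (I : D) :
    Integrable ((ival I).indicator fun _ => (1 : ℝ)) volume :=
  (integrable_indicator_iff (measurableSet_ival I)).2 (integrableOn_const (volume_ival_ne_top I))

lemma integral_indicator_ival (I : D) : ∫ x, (ival I).indicator (fun _ => (1 : ℝ)) x = len I := by
  rw [integral_indicator_const _ (measurableSet_ival I), measureReal_ival, smul_eq_mul, mul_one]

lemma haar_of_mem_lc {I : D} {x : ℝ} (hx : x ∈ ival (lc I)) : haar I x = -(√(len I))⁻¹ := by
  have hx' : x ∉ ival (rc I) := Set.disjoint_left.1 (disjoint_ival_lc_rc I) hx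
  simp [haar, hx, hx']

lemma haar_of_mem_rc {I : D} {x : ℝ} (hx : x ∈ ival (rc I)) : haar I x = (√(len I))⁻¹ := by
  have hx' : x ∉ ival (lc I) := Set.disjoint_right.1 (disjoint_ival_lc_rc I) hx
  simp [haar, hx, hx']

lemma haar_of_notMem {I : D} {x : ℝ} (hx : x ∉ ival I) : haar I x = 0 := by
  rw [ival_eq_union, Set.mem_union, not_or] at hx
  simp [haar, hx.1, hx.2]

lemma integral_haar (I : D) : ∫ x, haar I x = 0 := by
  simp only [haar]
  rw [integral_const_mul, integral_sub (integrable_indicator_ival _) (integrable_indicator_ival _),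
    integral_indicator_ival, integral_indicator_ival, len_lc, len_rc, sub_self, mul_zero]

lemma integral_haar_mul_self (I : D) : ∫ x, haar I x * haar I x = 1 := by
  have h : ∀ x, haar I x * haar I x = (len I)⁻¹ * (ival I).indicator (fun _ => (1 : ℝ)) x := by
    intro x
    have hsq : (√(len I))⁻¹ * (√(len I))⁻¹ = (len I)⁻¹ := by
      rw [← mul_inv, Real.mul_self_sqrt (len_pos I).le]
    by_cases hx : x ∈ ival I
    · rw [Set.indicator_of_mem hx, mul_one]
      rcases (ival_eq_union I ▸ hx : x ∈ ival (lc I) ∪ ival (rc I)) with h | h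
      · rw [haar_of_mem_lc h, neg_mul_neg, hsq]
      · rw [haar_of_mem_rc h, hsq]
    · rw [haar_of_notMem hx, Set.indicator_of_notMem hx, mul_zero, mul_zero]
  simp_rw [h]
  rw [integral_const_mul, integral_indicator_ival, inv_mul_cancel₀ (len_pos I).ne']

lemma exists_haar_eq_const_on {I J : D} (hIJ : I ≠ J) (hs : I.1 ≤ J.1) :
    ∃ c, ∀ x ∈ ival I, haar J x = c := by
  rcases ival_subset_or_disjoint hs with hsub | hdisj
  · rcases subset_lc_or_subset_rc_or_eq hsub with hl | hr | rfl
    · exact ⟨_, fun x hx => haar_of_mem_lc (hl hx)⟩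
    · exact ⟨_, fun x hx => haar_of_mem_rc (hr hx)⟩
    · exact absurd rfl hIJ
  · exact ⟨0, fun x hx => haar_of_notMem (Set.disjoint_left.1 hdisj hx)⟩

lemma integral_haar_mul_haar_of_ne {I J : D} (hIJ : I ≠ J) : ∫ x, haar I x * haar J x = 0 := by
  wlog hs : I.1 ≤ J.1 generalizing I J
  · simp_rw [mul_comm (haar I _)]
    exact this hIJ.symm (le_of_not_ge hs)
  -- `h_J` is constant on `I` and `∫ h_I = 0`
  obtain ⟨c, hc⟩ := exists_haar_eq_const_on hIJ hs
  have h : ∀ x, haar I x * haar J x = c * haar I x := by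
    intro x
    by_cases hx : x ∈ ival I
    · rw [hc x hx, mul_comm]
    · rw [haar_of_notMem hx, zero_mul, mul_zero]
  simp_rw [h]
  rw [integral_const_mul, integral_haar, mul_zero]

lemma integrable_haar_mul_haar (I J : D) : Integrable (fun x => haar I x * haar J x) volume :=
  (memℒp_haar I).integrable_mul (memℒp_haar J)

lemma integral_sum_haar_mul_haar (S : Finset D) (c : D → ℝ) (K : D) :
    ∫ x, (∑ I ∈ S, c I * haar I x) * haar K x = if K ∈ S then c K else 0 := by
  simp_rw [Finset.sum_mul, mul_assoc]
  rw [integral_finsetSum _ fun I _ => (integrable_haar_mul_haar I K).const_mul _]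
  simp_rw [integral_const_mul]
  split_ifs with hK
  · rw [Finset.sum_eq_single_of_mem K hK fun I _ hne => by
      rw [integral_haar_mul_haar_of_ne hne, mul_zero], integral_haar_mul_self, mul_one]
  · exact Finset.sum_eq_zero fun I hI => by
      rw [integral_haar_mul_haar_of_ne (ne_of_mem_of_not_mem hI hK), mul_zero]

lemma ip_sum_haar (S : Finset D) (c : D → ℝ) (K : D) :
    ip (fun x => ∑ I ∈ S, c I * haar I x) (haar K) = if K ∈ S then c K else 0 :=
  integral_sum_haar_mul_haar S c K

lemma l2normSq_sum_haar (S : Finset D) (c : D → ℝ) :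
    l2normSq (fun x => ∑ I ∈ S, c I * haar I x) = ∑ I ∈ S, c I ^ 2 := by
  have h : ∀ x, (∑ I ∈ S, c I * haar I x) ^ 2
      = ∑ K ∈ S, c K * ((∑ I ∈ S, c I * haar I x) * haar K x) := by
    intro x
    rw [sq, Finset.mul_sum]
    exact Finset.sum_congr rfl fun K _ => by ring
  have hint : ∀ K, Integrable (fun x => (∑ I ∈ S, c I * haar I x) * haar K x) volume := by
    intro K
    simp_rw [Finset.sum_mul, mul_assoc]
    exact integrable_finsetSum _ fun I _ => (integrable_haar_mul_haar I K).const_mul _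
  simp_rw [l2normSq, h]
  rw [integral_finsetSum _ fun K _ => (hint K).const_mul _]
  refine Finset.sum_congr rfl fun K hK => ?_
  rw [integral_const_mul, integral_sum_haar_mul_haar, if_pos hK, sq]

lemma coeFn_sum_haarLp (S : Finset D) (c : D → ℝ) :
    ⇑(∑ K ∈ S, c K • haarLp K) =ᵐ[volume] fun x => ∑ K ∈ S, c K * haar K x := by
  induction S using Finset.induction_on with
  | empty =>
    simp only [Finset.sum_empty]
    exact Lp.coeFn_zero ℝ 2 volume
  | insert a S ha ih =>
    simp_rw [Finset.sum_insert ha]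
    filter_upwards [Lp.coeFn_add (c a • haarLp a) (∑ K ∈ S, c K • haarLp K),
      Lp.coeFn_smul (c a) (haarLp a), (memℒp_haar a).coeFn_toLp, ih] with x h₁ h₂ h₃ h₄
    rw [h₁, Pi.add_apply, h₂, Pi.smul_apply, smul_eq_mul, haarLp, h₃, h₄]

lemma Tfull_sum_haar (σ : D → ℝ) (S : Finset D) (c : D → ℝ) :
    ⇑(Tfull σ fun x => ∑ I ∈ S, c I * haar I x)
      =ᵐ[volume] fun x => ∑ I ∈ S, (σ I * c I) * haar I x := by
  have h : Tfull σ (fun x => ∑ I ∈ S, c I * haar I x) = ∑ I ∈ S, (σ I * c I) • haarLp I := by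
    rw [Tfull, tsum_eq_sum fun K hK => by rw [ip_sum_haar, if_neg hK, mul_zero, zero_smul]]
    exact Finset.sum_congr rfl fun K hK => by rw [ip_sum_haar, if_pos hK]
  rw [h]
  exact coeFn_sum_haarLp S _

lemma haar1_eq_indicator (J : D) : haar1 J = (ival J).indicator fun _ => (√(len J))⁻¹ := by
  funext x
  by_cases hx : x ∈ ival J <;> simp [haar1, hx]

lemma eLpNorm_haar1 (J : D) : eLpNorm (haar1 J) 2 volume = 1 := by
  rw [haar1_eq_indicator, eLpNorm_indicator_const (measurableSet_ival J) two_ne_zero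
    ENNReal.ofNat_ne_top, volume_ival, ENNReal.toReal_ofNat,
    ENNReal.ofReal_rpow_of_pos (len_pos J), ← Real.sqrt_eq_rpow, ← ofReal_norm,
    Real.norm_of_nonneg (inv_nonneg.2 (Real.sqrt_nonneg _)), ← ENNReal.ofReal_mul (by positivity),
    inv_mul_cancel₀ (sqrt_len_pos J).ne', ENNReal.ofReal_one]

lemma unitL2_haar1 (J : D) : UnitL2 (haar1 J) := by
  refine ⟨?_, eLpNorm_haar1 J⟩
  rw [haar1_eq_indicator]
  exact memLp_indicator_const 2 (measurableSet_ival J) _ (.inr (volume_ival_ne_top J))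

instance : Nonempty {f : ℝ → ℝ // UnitL2 f} := ⟨⟨haar1 (0, 0), unitL2_haar1 _⟩⟩

lemma integral_sq_eq_one_of_unitL2 {f : ℝ → ℝ} (hf : UnitL2 f) : ∫ x, f x ^ 2 = 1 := by
  have h := hf.1.eLpNorm_eq_integral_rpow_norm two_ne_zero ENNReal.ofNat_ne_top
  rw [hf.2, eq_comm, ENNReal.ofReal_eq_one, ENNReal.toReal_ofNat] at h
  rw [Real.rpow_inv_eq (integral_nonneg fun _ => by positivity) zero_le_one two_ne_zero,
    Real.one_rpow] at h
  simpa [Real.norm_eq_abs] using h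

lemma ip_haar1 (f : ℝ → ℝ) (I : D) : ip f (haar1 I) = (√(len I))⁻¹ * ∫ x in ival I, f x := by
  rw [ip, haar1_eq_indicator, ← integral_const_mul, ← integral_indicator (measurableSet_ival I)]
  congr 1 with x
  by_cases hx : x ∈ ival I <;> simp [hx, mul_comm]

lemma ip_haar1_sq (f : ℝ → ℝ) (I : D) :
    ip f (haar1 I) ^ 2 = (∫ x in ival I, f x) ^ 2 / len I := by
  rw [ip_haar1, mul_pow, inv_pow, Real.sq_sqrt (len_pos I).le, inv_mul_eq_div]

lemma ip_haar1_haar1_sq {I J : D} (h : ival I ⊆ ival J) :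
    ip (haar1 J) (haar1 I) ^ 2 = len I / len J := by
  have hJ : ∀ x ∈ ival I, haar1 J x = (√(len J))⁻¹ := fun x hx => by
    rw [haar1_eq_indicator, Set.indicator_of_mem (h hx)]
  rw [ip_haar1_sq, setIntegral_congr_fun (measurableSet_ival I) hJ, setIntegral_const,
    measureReal_ival, smul_eq_mul, mul_pow, inv_pow, Real.sq_sqrt (len_pos J).le]
  field_simp [(len_pos I).ne', (len_pos J).ne']

/-! ### The dyadic Carleson embedding theorem -/

lemma sq_setIntegral_le {α : Type*} [MeasurableSpace α] {μ : Measure α} {t : Set α}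
    (ht : μ t ≠ ∞) {f : α → ℝ} (hf : MemLp f 2 (μ.restrict t)) :
    (∫ x in t, f x ∂μ) ^ 2 ≤ μ.real t * ∫ x in t, f x ^ 2 ∂μ := by
  rcases eq_or_ne (μ t) 0 with h0 | h0
  · simp [Measure.restrict_eq_zero.2 h0]
  have : IsFiniteMeasure (μ.restrict t) := isFiniteMeasure_restrict.2 ht
  have hjensen := (even_two.convexOn_pow (𝕜 := ℝ)).map_set_average_le
    (continuous_pow 2).continuousOn isClosed_univ h0 ht (.of_forall fun _ => Set.mem_univ _)
    (memLp_one_iff_integrable.1 (hf.mono_exponent one_le_two)) hf.integrable_sq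
  have hpos : 0 < μ.real t := ENNReal.toReal_pos h0 ht
  simp only [setAverage_eq, smul_eq_mul] at hjensen
  rw [mul_pow, inv_pow, sq (μ.real t), mul_inv, mul_assoc] at hjensen
  have := le_of_mul_le_mul_left hjensen (inv_pos.2 hpos)
  rwa [inv_mul_le_iff₀ hpos] at this

lemma integrableOn_ival_of_memLp {f : ℝ → ℝ} (hf : MemLp f 2 volume) (K : D) :
    IntegrableOn f (ival K) :=
  have : IsFiniteMeasure (volume.restrict (ival K)) :=
    isFiniteMeasure_restrict.2 (volume_ival_ne_top K)
  (hf.restrict _).integrable one_le_two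

lemma sum_filter_subset_ival (s : Finset D) (J : D) (g : D → ℝ) :
    ∑ I ∈ s with ival I ⊆ ival J, g I
      = (if J ∈ s then g J else 0) + ∑ I ∈ s with ival I ⊆ ival (lc J), g I
        + ∑ I ∈ s with ival I ⊆ ival (rc J), g I := by
  simp only [Finset.sum_filter, ← Finset.sum_ite_eq' s J g, ← Finset.sum_add_distrib]
  refine Finset.sum_congr rfl fun I _ => ?_
  have hlr : ival I ⊆ ival (lc J) → ¬ ival I ⊆ ival (rc J) := fun hl hr => by
    obtain ⟨x, hx⟩ := ival_nonempty I
    exact Set.disjoint_left.1 (disjoint_ival_lc_rc J) (hl hx) (hr hx)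
  have hJl : ¬ ival J ⊆ ival (lc J) := fun h => by have := fst_le_of_subset h; simp [lc] at this
  have hJr : ¬ ival J ⊆ ival (rc J) := fun h => by have := fst_le_of_subset h; simp [rc] at this
  by_cases hIJ : ival I ⊆ ival J
  · rcases subset_lc_or_subset_rc_or_eq hIJ with h | h | rfl
    · have hne : I ≠ J := by rintro rfl; exact hJl h
      simp [hIJ, h, hne, hlr h]
    · have hne : I ≠ J := by rintro rfl; exact hJr h
      have hl : ¬ ival I ⊆ ival (lc J) := fun h' => hlr h' h
      simp [hIJ, h, hne, hl]
    · simp [hJl, hJr]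
  · have hne : I ≠ J := by rintro rfl; exact hIJ subset_rfl
    have hl : ¬ ival I ⊆ ival (lc J) := fun h => hIJ (h.trans (ival_lc_subset J))
    have hr : ¬ ival I ⊆ ival (rc J) := fun h => hIJ (h.trans (ival_rc_subset J))
    simp [hIJ, hne, hl, hr]

lemma setIntegral_ival_eq_add {g : ℝ → ℝ} {J : D} (hg : IntegrableOn g (ival J)) :
    ∫ x in ival J, g x = (∫ x in ival (lc J), g x) + ∫ x in ival (rc J), g x := by
  rw [ival_eq_union] at hg ⊢
  rw [setIntegral_union (disjoint_ival_lc_rc J) (measurableSet_ival _) hg.left_of_union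
    hg.right_of_union]

/-- The main inequality of the Bellman function `𝔹(F, f, M) = 4F - 4f²/M`: its value at an
interval dominates its values at the two halves plus the Carleson term of the interval. -/
lemma bellman_step {h a A₁ A₂ f₁ f₂ F₁ F₂ S₁ S₂ : ℝ} (hh : 0 < h) (ha : 0 ≤ a) (hA₁ : 0 ≤ A₁)
    (hA₂ : 0 ≤ A₂) (hpack : a + A₁ + A₂ ≤ h)
    (hS₁ : S₁ ≤ 4 * F₁ - 4 * f₁ ^ 2 / (h / 2 + A₁))
    (hS₂ : S₂ ≤ 4 * F₂ - 4 * f₂ ^ 2 / (h / 2 + A₂)) :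
    a * ((f₁ + f₂) / h) ^ 2 + S₁ + S₂
      ≤ 4 * (F₁ + F₂) - 4 * (f₁ + f₂) ^ 2 / (h + (a + A₁ + A₂)) := by
  have hP : 0 < h + A₁ + A₂ := by linarith
  have hQ : 0 < h + (a + A₁ + A₂) := by linarith
  have hsplit : 4 * (f₁ + f₂) ^ 2 / (h + A₁ + A₂)
      ≤ 4 * f₁ ^ 2 / (h / 2 + A₁) + 4 * f₂ ^ 2 / (h / 2 + A₂) := by
    rw [div_add_div _ _ (by positivity) (by positivity), div_le_div_iff₀ hP (by positivity)]
    nlinarith [sq_nonneg (f₁ * (h / 2 + A₂) - f₂ * (h / 2 + A₁))]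
  -- the gain `4q/P - 4q/Q = 4qa/(PQ)` beats `aq/h²` because `P, Q ≤ 2h`
  have hgain : a * ((f₁ + f₂) / h) ^ 2
      ≤ 4 * (f₁ + f₂) ^ 2 / (h + A₁ + A₂) - 4 * (f₁ + f₂) ^ 2 / (h + (a + A₁ + A₂)) := by
    have hPQ : (h + A₁ + A₂) * (h + (a + A₁ + A₂)) ≤ 4 * h ^ 2 := by nlinarith
    rw [div_sub_div _ _ hP.ne' hQ.ne', le_div_iff₀ (by positivity)]
    calc a * ((f₁ + f₂) / h) ^ 2 * ((h + A₁ + A₂) * (h + (a + A₁ + A₂)))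
        ≤ a * ((f₁ + f₂) / h) ^ 2 * (4 * h ^ 2) := by gcongr
      _ = _ := by field_simp; ring
  linarith

def BellmanBound (s : Finset D) (w : D → ℝ) (f : ℝ → ℝ) (J : D) : Prop :=
  ∑ I ∈ s with ival I ⊆ ival J, w I * ip f (haar1 I) ^ 2 ≤
    4 * (∫ x in ival J, f x ^ 2) -
      4 * (∫ x in ival J, f x) ^ 2 / (len J + ∑ I ∈ s with ival I ⊆ ival J, w I * len I)

section CarlesonEmbedding

variable {s : Finset D} {w : D → ℝ} {f : ℝ → ℝ}

lemma BellmanBound.of_forall_not_subset {J : D} (hf : MemLp f 2 volume)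
    (hJ : ∀ I ∈ s, ¬ ival I ⊆ ival J) : BellmanBound s w f J := by
  have hcs := sq_setIntegral_le (volume_ival_ne_top J) (hf.restrict (ival J))
  rw [measureReal_ival] at hcs
  rw [BellmanBound, Finset.filter_false_of_mem hJ, Finset.sum_empty, Finset.sum_empty, add_zero,
    sub_nonneg, div_le_iff₀ (len_pos J)]
  linarith

lemma BellmanBound.of_children (hw : ∀ I, 0 ≤ w I) {J : D}
    (hpack : ∑ I ∈ s with ival I ⊆ ival J, w I * len I ≤ len J) (hf : MemLp f 2 volume)
    (hl : BellmanBound s w f (lc J)) (hr : BellmanBound s w f (rc J)) :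
    BellmanBound s w f J := by
  have hmass : ∀ K, 0 ≤ ∑ I ∈ s with ival I ⊆ ival K, w I * len I :=
    fun K => Finset.sum_nonneg fun I _ => mul_nonneg (hw I) (len_pos I).le
  have hJ : (if J ∈ s then w J * ip f (haar1 J) ^ 2 else 0)
      = (if J ∈ s then w J * len J else 0) * ((∫ x in ival J, f x) / len J) ^ 2 := by
    split_ifs
    · rw [ip_haar1_sq]
      field_simp [(len_pos J).ne']
    · rw [zero_mul]
  rw [BellmanBound, len_lc] at hl
  rw [BellmanBound, len_rc] at hr
  rw [BellmanBound, sum_filter_subset_ival, sum_filter_subset_ival s J, hJ,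
    setIntegral_ival_eq_add (integrableOn_ival_of_memLp hf J),
    setIntegral_ival_eq_add (g := fun x => f x ^ 2) hf.integrable_sq.integrableOn]
  rw [sum_filter_subset_ival] at hpack
  have ha : 0 ≤ if J ∈ s then w J * len J else 0 := by
    split_ifs
    exacts [mul_nonneg (hw J) (len_pos J).le, le_rfl]
  exact bellman_step (len_pos J) ha (hmass _) (hmass _) hpack hl hr

theorem bellmanBound_of_packing (hw : ∀ I, 0 ≤ w I)
    (hpack : ∀ J, ∑ I ∈ s with ival I ⊆ ival J, w I * len I ≤ len J) (hf : MemLp f 2 volume)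
    (J : D) : BellmanBound s w f J := by
  obtain ⟨m, hm⟩ := (s.image Prod.fst).bddBelow
  have hs : ∀ I ∈ s, m - 1 < I.1 := fun I hI => by
    have := hm (Finset.mem_coe.2 (Finset.mem_image_of_mem Prod.fst hI)); omega
  suffices h : ∀ n ≥ m - 1, ∀ J : D, J.1 ≤ n → BellmanBound s w f J from
    h _ (le_max_left _ J.1) J (le_max_right _ _)
  intro n hn
  induction n, hn using Int.leInduction with
  | base => exact fun J hJ => .of_forall_not_subset hf fun I hI hsub =>
      (fst_le_of_subset hsub).not_gt ((hJ.trans_lt (hs I hI)))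
  | succ n _ ih =>
    intro J hJ
    rcases le_or_gt J.1 n with h | h
    · exact ih J h
    · exact .of_children hw (hpack J) hf (ih _ (by simp only [lc]; omega))
        (ih _ (by simp only [rc]; omega))

theorem sum_mul_ip_haar1_sq_le (hw : ∀ I, 0 ≤ w I)
    (hpack : ∀ J, ∑ I ∈ s with ival I ⊆ ival J, w I * len I ≤ len J) (hf : MemLp f 2 volume) :
    ∑ I ∈ s, w I * ip f (haar1 I) ^ 2 ≤ 4 * ∫ x, f x ^ 2 := by
  obtain ⟨N, hN⟩ := (s.image Prod.fst).bddAbove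
  have hsN : ∀ I ∈ s, I.1 ≤ N := fun I hI => hN (Finset.mem_coe.2 (Finset.mem_image_of_mem _ hI))
  -- group the intervals of `s` by their pairwise disjoint ancestors of scale `N`
  set T := s.image (ancestor N)
  have hdisj : Set.Pairwise (T : Set D) fun J J' => Disjoint (ival J) (ival J') := by
    intro J hJ J' hJ' hne
    obtain ⟨I, -, rfl⟩ := Finset.mem_image.1 hJ
    obtain ⟨I', -, rfl⟩ := Finset.mem_image.1 hJ'
    exact disjoint_ival_of_fst_eq (I := ancestor N I) (J := ancestor N I') rfl hne
  have hfiber : ∀ J, ∑ I ∈ s with ancestor N I = J, w I * ip f (haar1 I) ^ 2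
      ≤ 4 * ∫ x in ival J, f x ^ 2 := by
    intro J
    have hsub : {I ∈ s | ancestor N I = J} ⊆ {I ∈ s | ival I ⊆ ival J} := by
      intro I
      simp only [Finset.mem_filter]
      rintro ⟨hI, rfl⟩
      exact ⟨hI, ival_subset_ival_ancestor (hsN I hI)⟩
    refine (Finset.sum_le_sum_of_subset_of_nonneg hsub fun I _ _ => mul_nonneg (hw I)
      (sq_nonneg _)).trans ((bellmanBound_of_packing hw hpack hf J).trans (sub_le_self _ ?_))
    exact div_nonneg (by positivity) (add_nonneg (len_pos J).le
      (Finset.sum_nonneg fun I _ => mul_nonneg (hw I) (len_pos I).le))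
  calc ∑ I ∈ s, w I * ip f (haar1 I) ^ 2
      = ∑ J ∈ T, ∑ I ∈ s with ancestor N I = J, w I * ip f (haar1 I) ^ 2 :=
        (Finset.sum_fiberwise_of_maps_to (fun I hI => Finset.mem_image_of_mem _ hI) _).symm
    _ ≤ ∑ J ∈ T, 4 * ∫ x in ival J, f x ^ 2 := Finset.sum_le_sum fun J _ => hfiber J
    _ = 4 * ∫ x in ⋃ J ∈ T, ival J, f x ^ 2 := by
        rw [integral_biUnion_finset T (fun J _ => measurableSet_ival J) hdisj
          fun J _ => hf.integrable_sq.integrableOn, Finset.mul_sum]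
    _ ≤ 4 * ∫ x, f x ^ 2 := mul_le_mul_of_nonneg_left
        (setIntegral_le_integral hf.integrable_sq (.of_forall fun x => sq_nonneg (f x)))
        zero_le_four

theorem sum_mul_ip_haar1_sq_le_of_packing {A : ℝ} (hA : 0 ≤ A) (hw : ∀ I, 0 ≤ w I)
    (hpack : ∀ J, ∑ I ∈ s with ival I ⊆ ival J, w I * len I ≤ A * len J)
    (hf : MemLp f 2 volume) :
    ∑ I ∈ s, w I * ip f (haar1 I) ^ 2 ≤ 4 * A * ∫ x, f x ^ 2 := by
  rcases hA.eq_or_lt with rfl | hA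
  · have hw0 : ∀ I ∈ s, w I = 0 := fun I hI => by
      have := (Finset.single_le_sum (fun K _ => mul_nonneg (hw K) (len_pos K).le)
        (Finset.mem_filter.2 ⟨hI, Set.Subset.rfl⟩)).trans (hpack I)
      rw [zero_mul] at this
      exact le_antisymm (nonpos_of_mul_nonpos_left this (len_pos I)) (hw I)
    rw [Finset.sum_eq_zero fun I hI => by rw [hw0 I hI, zero_mul], mul_zero, zero_mul]
  · have hpack' : ∀ J, ∑ I ∈ s with ival I ⊆ ival J, w I / A * len I ≤ len J := fun J => by
      simp_rw [div_mul_eq_mul_div, ← Finset.sum_div]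
      exact div_le_of_le_mul₀ hA.le (len_pos J).le (by rw [mul_comm]; exact hpack J)
    have := sum_mul_ip_haar1_sq_le (fun I => div_nonneg (hw I) hA.le) hpack' hf
    simp_rw [div_mul_eq_mul_div, ← Finset.sum_div, div_le_iff₀ hA] at this
    linarith

end CarlesonEmbedding

/-! ### The operator norm -/

lemma ip_congr_ae {g g' : ℝ → ℝ} (h : g =ᵐ[volume] g') (φ : ℝ → ℝ) : ip g φ = ip g' φ :=
  integral_congr_ae (h.mono fun x hx => by simp only [hx])

theorem l2normSq_Pb_Tfull_Pb (b β f : ℝ → ℝ) (σ : D → ℝ) {s S : Finset D} (hsS : s ⊆ S) :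
    l2normSq (Pb S false false true b (Tfull σ (Pb s false true false β f)))
      = ∑ I ∈ s, (σ I * (ip b (haar1 I) * ip β (haar I) / len I) * ip f (haar1 I)) ^ 2 := by
  set d : D → ℝ := fun J => ip β (haar J) / √(len J) * ip f (haar1 J)
  have hT : ⇑(Tfull σ (Pb s false true false β f)) =ᵐ[volume]
      fun x => ∑ I ∈ s, (σ I * d I) * haar I x :=
    Tfull_sum_haar σ s d
  have houter : Pb S false false true b (Tfull σ (Pb s false true false β f)) = fun x =>
      ∑ I ∈ S, (ip b (haar1 I) / √(len I) * (if I ∈ s then σ I * d I else 0)) * haar I x := by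
    funext x
    refine Finset.sum_congr rfl fun I _ => ?_
    simp only [hfun]
    rw [ip_congr_ae hT, ip_sum_haar]
  rw [houter, l2normSq_sum_haar, ← Finset.sum_subset hsS fun I _ hI => by simp [hI]]
  refine Finset.sum_congr rfl fun I hI => ?_
  have hL : len I = √(len I) ^ 2 := (Real.sq_sqrt (len_pos I).le).symm
  have hu := (sqrt_len_pos I).ne'
  simp only [if_pos hI, d]
  set u := √(len I)
  rw [hL]
  field_simp

lemma sqrt_carlOn_term_le_sqrt_sum_sq (s : Finset D) (a : D → ℝ) (J : D) :
    √((len J)⁻¹ * ∑ I ∈ s with ival I ⊆ ival J, a I ^ 2 * len I) ≤ √(∑ I ∈ s, a I ^ 2) := by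
  refine Real.sqrt_le_sqrt ?_
  rw [inv_mul_le_iff₀ (len_pos J), Finset.mul_sum]
  calc ∑ I ∈ s with ival I ⊆ ival J, a I ^ 2 * len I
      ≤ ∑ I ∈ s with ival I ⊆ ival J, len J * a I ^ 2 := Finset.sum_le_sum fun I hI => by
        rw [mul_comm]
        exact mul_le_mul_of_nonneg_right (len_le_of_subset (Finset.mem_filter.1 hI).2)
          (sq_nonneg _)
    _ ≤ ∑ I ∈ s, len J * a I ^ 2 := Finset.sum_le_sum_of_subset_of_nonneg
        (Finset.filter_subset _ _) fun I _ _ => mul_nonneg (len_pos J).le (sq_nonneg _)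

lemma carlOn_nonneg (s : Finset D) (a : D → ℝ) : 0 ≤ carlOn s a :=
  Real.iSup_nonneg fun _ => Real.sqrt_nonneg _

lemma sum_sq_mul_len_le_carlOn_sq (s : Finset D) (a : D → ℝ) (J : D) :
    ∑ I ∈ s with ival I ⊆ ival J, a I ^ 2 * len I ≤ carlOn s a ^ 2 * len J := by
  have hJ : √((len J)⁻¹ * ∑ I ∈ s with ival I ⊆ ival J, a I ^ 2 * len I) ≤ carlOn s a :=
    le_ciSup ⟨_, Set.forall_mem_range.2 (sqrt_carlOn_term_le_sqrt_sum_sq s a)⟩ J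
  rw [Real.sqrt_le_left (carlOn_nonneg s a), inv_mul_le_iff₀ (len_pos J), mul_comm] at hJ
  exact hJ

/-- The norm of the embedding `f ↦ (a_I ⟨f, h¹_I⟩)_{I ∈ s}` of `L²(ℝ)` into `ℓ²`. -/
def embeddingNorm (s : Finset D) (a : D → ℝ) : ℝ :=
  ⨆ f : {f : ℝ → ℝ // UnitL2 f}, √(∑ I ∈ s, (a I * ip f.1 (haar1 I)) ^ 2)

lemma sqrt_sum_sq_le_two_mul_carlOn (s : Finset D) (a : D → ℝ) {f : ℝ → ℝ} (hf : UnitL2 f) :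
    √(∑ I ∈ s, (a I * ip f (haar1 I)) ^ 2) ≤ 2 * carlOn s a := by
  have h := sum_mul_ip_haar1_sq_le_of_packing (sq_nonneg (carlOn s a)) (fun I => sq_nonneg (a I))
    (sum_sq_mul_len_le_carlOn_sq s a) hf.1
  rw [integral_sq_eq_one_of_unitL2 hf, mul_one] at h
  rw [Real.sqrt_le_left (by linarith [carlOn_nonneg s a])]
  simp_rw [mul_pow]
  linarith

lemma embeddingNorm_le_two_mul_carlOn (s : Finset D) (a : D → ℝ) :
    embeddingNorm s a ≤ 2 * carlOn s a :=
  ciSup_le fun f => sqrt_sum_sq_le_two_mul_carlOn s a f.2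

lemma carlOn_le_embeddingNorm (s : Finset D) (a : D → ℝ) : carlOn s a ≤ embeddingNorm s a := by
  have hbdd : BddAbove (Set.range fun f : {f : ℝ → ℝ // UnitL2 f} =>
      √(∑ I ∈ s, (a I * ip f.1 (haar1 I)) ^ 2)) :=
    ⟨2 * carlOn s a, Set.forall_mem_range.2 fun f => sqrt_sum_sq_le_two_mul_carlOn s a f.2⟩
  refine ciSup_le fun J => (Real.sqrt_le_sqrt ?_).trans (le_ciSup hbdd ⟨haar1 J, unitL2_haar1 J⟩)
  rw [Finset.mul_sum]
  refine le_of_eq_of_le (Finset.sum_congr rfl fun I hI => ?_)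
    (Finset.sum_le_sum_of_subset_of_nonneg (Finset.filter_subset _ _) fun I _ _ => sq_nonneg _)
  rw [mul_pow, ip_haar1_haar1_sq (Finset.mem_filter.1 hI).2]
  ring

theorem opNorm_Pb_Tfull_Pb (b β : ℝ → ℝ) {s S : Finset D} (hsS : s ⊆ S) {σ : D → ℝ}
    (hσ : ∀ I, σ I = 1 ∨ σ I = -1) :
    opNorm (fun f => Pb S false false true b (Tfull σ (Pb s false true false β f)))
      = embeddingNorm s fun I => ip b (haar1 I) * ip β (haar I) / len I := by
  refine iSup_congr fun f => ?_
  rw [l2normSq_Pb_Tfull_Pb b β f.1 σ hsS]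
  congr 1
  refine Finset.sum_congr rfl fun I _ => ?_
  rcases hσ I with h | h <;> simp [h]

/-- The operator norm of `P^{0,0}_{b,1} T_σ P^{0,1}_{β,0}` is independent of
the choice of signs `σ` and is equivalent to the Carleson norm of
`{⟨b,h¹_I⟩⟨β,h_I⟩/|I|}`. -/
theorem statement17 :
    ∃ c C : ℝ, 0 < c ∧ 0 < C ∧
      ∀ (b β : ℝ → ℝ) (cb cβ : D →₀ ℝ), FinHaar b cb → FinHaar β cβ →
        ∀ σ : D → ℝ, (∀ I, σ I = 1 ∨ σ I = -1) →
          (∀ σ' : D → ℝ, (∀ I, σ' I = 1 ∨ σ' I = -1) →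
            opNorm (fun f => Pb (cb.support ∪ cβ.support) false false true b
              (⇑(Tfull σ (Pb cβ.support false true false β f)))) = opNorm (fun f => Pb (cb.support ∪ cβ.support) false false true b
              (⇑(Tfull σ' (Pb cβ.support false true false β f))))) ∧
          c * carlOn cβ.support (fun I => ip b (haar1 I) * ip β (haar I) / len I) ≤
            opNorm (fun f => Pb (cb.support ∪ cβ.support) false false true b
              (⇑(Tfull σ (Pb cβ.support false true false β f)))) ∧
          opNorm (fun f => Pb (cb.support ∪ cβ.support) false false true b
              (⇑(Tfull σ (Pb cβ.support false true false β f)))) ≤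
            C * carlOn cβ.support (fun I => ip b (haar1 I) * ip β (haar I) / len I) := by
  refine ⟨1, 2, one_pos, two_pos, fun b β cb cβ _ _ σ hσ => ?_⟩
  have hsS : cβ.support ⊆ cb.support ∪ cβ.support := Finset.subset_union_right
  rw [opNorm_Pb_Tfull_Pb b β hsS hσ, one_mul]
  exact ⟨fun σ' hσ' => (opNorm_Pb_Tfull_Pb b β hsS hσ').symm, carlOn_le_embeddingNorm _ _,
    embeddingNorm_le_two_mul_carlOn _ _⟩

end RandomParaproducts
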